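/- Let μ ∈ ℝ and σ > 0. If Q is a Borel probability measure on ℝ with mean exactly μ, variance exactly σ², and symmetric about μ (i.e. Q((-∞, μ−x]) = Q([μ+x, ∞)) for all x ∈ ℝ), then ∫ 2((x−μ)₊)² dQ(x) = σ². Consequently sup_{Q∈H_S(μ,σ)} ∫ 2((x−μ)₊)²/σ² dQ(x) = 1, i.e. E(x) = 2((x−μ)₊)²/σ² is a precise e-variable for H_S(μ,σ). -/

import Mathlib

open MeasureTheory Set
open scoped ENNReal

/-- Mean of a distribution on ℝ. -/
noncomputable def distMean (Q : Measure ℝ) : ℝ := ∫ x, x ∂Q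

/-- Variance of a distribution on ℝ. -/
noncomputable def distVar (Q : Measure ℝ) : ℝ := ∫ x, (x - distMean Q)^2 ∂Q

/-- `H(μ,σ)`: Borel probability measures on ℝ with finite second moment,
mean at most `μ`, and variance at most `σ²`. -/
def MemH (μ σ : ℝ) (Q : Measure ℝ) : Prop :=
  IsProbabilityMeasure Q ∧ Integrable (fun x => x^2) Q ∧
    distMean Q ≤ μ ∧ distVar Q ≤ σ^2

/-- A distribution `Q` with mean `m` is symmetric if
`Q((-∞, m−x]) = Q([m+x, ∞))` for all `x`. -/
def IsSymmetricDist (Q : Measure ℝ) : Prop :=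
  ∀ x : ℝ, Q (Iic (distMean Q - x)) = Q (Ici (distMean Q + x))

/-!
Symmetry about `m` says exactly that `Q` is invariant under the reflection `x ↦ 2m - x`, which
exchanges `(x - m)₊` and `(m - x)₊`. Hence `∫ 2 (x - m)₊² dQ = ∫ ((x - m)₊² + (m - x)₊²) dQ`,
which is the variance. For `Q ∈ H_S(μ, σ)` the mean `m` is at most `μ`, so `(x - μ)₊ ≤ (x - m)₊`
and the e-value is at most `Var Q / σ² ≤ 1`; the symmetric two-point law on `μ ± σ` attains `1`.
-/

lemma preimage_two_mul_sub_Iic (m a : ℝ) :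
    (fun x : ℝ => 2 * m - x) ⁻¹' Iic a = Ici (2 * m - a) := by
  ext x
  simp only [mem_preimage, mem_Iic, mem_Ici]
  constructor <;> intro h <;> linarith

theorem map_two_mul_sub_eq_self_iff {Q : Measure ℝ} [IsFiniteMeasure Q] {m : ℝ} :
    Q.map (fun x => 2 * m - x) = Q ↔ ∀ x, Q (Iic (m - x)) = Q (Ici (m + x)) := by
  have map_Iic : ∀ a, Q.map (fun x => 2 * m - x) (Iic a) = Q (Ici (2 * m - a)) := fun a => by
    rw [Measure.map_apply (by fun_prop) measurableSet_Iic, preimage_two_mul_sub_Iic]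
  constructor
  · intro hQ x
    conv_lhs => rw [← hQ]
    rw [map_Iic]
    ring_nf
  · intro hsym
    refine Measure.ext_of_Iic _ _ fun a => ?_
    rw [map_Iic]
    have h := hsym (m - a)
    rw [sub_sub_cancel, show m + (m - a) = 2 * m - a by ring] at h
    exact h.symm

lemma sq_max_sub_add_sq_max_sub (x m : ℝ) :
    max (x - m) 0 ^ 2 + max (m - x) 0 ^ 2 = (x - m) ^ 2 := by
  rcases le_total x m with h | h
  · rw [max_eq_right (by linarith), max_eq_left (by linarith)]; ring
  · rw [max_eq_left (by linarith), max_eq_right (by linarith)]; ring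

section SecondMoment

variable {Q : Measure ℝ} [IsFiniteMeasure Q]

lemma integrable_sub_sq_of_integrable_sq (hQ : Integrable (fun x => x ^ 2) Q) (c : ℝ) :
    Integrable (fun x => (x - c) ^ 2) Q :=
  (((memLp_two_iff_integrable_sq measurable_id.aestronglyMeasurable).2 hQ).sub
    (memLp_const c)).integrable_sq

lemma integrable_max_sub_sq_of_integrable_sq (hQ : Integrable (fun x => x ^ 2) Q) (c : ℝ) :
    Integrable (fun x => max (x - c) 0 ^ 2) Q := by
  refine (integrable_sub_sq_of_integrable_sq hQ c).mono' (by fun_prop) (ae_of_all _ fun x => ?_)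
  rw [Real.norm_of_nonneg (by positivity), ← sq_max_sub_add_sq_max_sub x c]
  exact le_add_of_nonneg_right (sq_nonneg _)

theorem integral_two_mul_max_sub_sq_of_symm (hQ : Integrable (fun x => x ^ 2) Q) {m : ℝ}
    (hsym : ∀ x, Q (Iic (m - x)) = Q (Ici (m + x))) :
    ∫ x, 2 * max (x - m) 0 ^ 2 ∂Q = ∫ x, (x - m) ^ 2 ∂Q := by
  have hpos := integrable_max_sub_sq_of_integrable_sq hQ m
  have hreflect : ∫ x, max (m - x) 0 ^ 2 ∂Q = ∫ x, max (x - m) 0 ^ 2 ∂Q := by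
    conv_lhs => rw [← map_two_mul_sub_eq_self_iff.2 hsym]
    rw [integral_map (by fun_prop) (by fun_prop)]
    congr 1
    funext x
    congr 2
    ring
  have hneg : Integrable (fun x => max (m - x) 0 ^ 2) Q := by
    refine ((integrable_sub_sq_of_integrable_sq hQ m).sub hpos).congr (ae_of_all _ fun x => ?_)
    simp only [Pi.sub_apply, ← sq_max_sub_add_sq_max_sub x m, add_sub_cancel_left]
  calc ∫ x, 2 * max (x - m) 0 ^ 2 ∂Q
      = ∫ x, max (x - m) 0 ^ 2 ∂Q + ∫ x, max (m - x) 0 ^ 2 ∂Q := by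
        rw [integral_const_mul, hreflect, two_mul]
    _ = ∫ x, (x - m) ^ 2 ∂Q := by
        rw [← integral_add hpos hneg]
        simp_rw [sq_max_sub_add_sq_max_sub]

end SecondMoment

theorem integral_two_mul_max_sub_sq_le_of_memH {μ σ : ℝ} {Q : Measure ℝ} (hQ : MemH μ σ Q)
    (hsym : IsSymmetricDist Q) : ∫ x, 2 * max (x - μ) 0 ^ 2 ∂Q ≤ σ ^ 2 := by
  obtain ⟨_, hsq, hmean, hvar⟩ := hQ
  calc ∫ x, 2 * max (x - μ) 0 ^ 2 ∂Q ≤ ∫ x, 2 * max (x - distMean Q) 0 ^ 2 ∂Q := by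
        refine integral_mono ((integrable_max_sub_sq_of_integrable_sq hsq μ).const_mul 2)
          ((integrable_max_sub_sq_of_integrable_sq hsq _).const_mul 2) fun x => ?_
        gcongr
    _ = distVar Q := integral_two_mul_max_sub_sq_of_symm hsq hsym
    _ ≤ σ ^ 2 := hvar

section TwoPoint

variable {α : Type*} [MeasurableSpace α]

noncomputable def twoPointMeasure (a b : α) : Measure α :=
  (2 : ℝ≥0∞)⁻¹ • (Measure.dirac a + Measure.dirac b)

instance (a b : α) : IsProbabilityMeasure (twoPointMeasure a b) := by
  constructor
  simp only [twoPointMeasure, Measure.smul_apply, Measure.coe_add, Pi.add_apply,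
    measure_univ, smul_eq_mul, one_add_one_eq_two]
  exact ENNReal.inv_mul_cancel two_ne_zero ENNReal.ofNat_ne_top

lemma twoPointMeasure_comm (a b : α) : twoPointMeasure a b = twoPointMeasure b a := by
  rw [twoPointMeasure, add_comm, ← twoPointMeasure]

lemma map_twoPointMeasure {β : Type*} [MeasurableSpace β] [MeasurableSingletonClass α]
    [MeasurableSingletonClass β] {f : α → β} (hf : Measurable f) (a b : α) :
    (twoPointMeasure a b).map f = twoPointMeasure (f a) (f b) := by
  rw [twoPointMeasure, Measure.map_smul, Measure.map_add _ _ hf, Measure.map_dirac,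
    Measure.map_dirac, twoPointMeasure]

lemma integrable_twoPointMeasure [MeasurableSingletonClass α] (f : α → ℝ) (a b : α) :
    Integrable f (twoPointMeasure a b) :=
  ((integrable_dirac enorm_lt_top).add_measure (integrable_dirac enorm_lt_top)).smul_measure
    (by norm_num)

lemma integral_twoPointMeasure [MeasurableSingletonClass α] (f : α → ℝ) (a b : α) :
    ∫ x, f x ∂twoPointMeasure a b = (f a + f b) / 2 := by
  rw [twoPointMeasure, integral_smul_measure, integral_add_measure
    (integrable_dirac enorm_lt_top) (integrable_dirac enorm_lt_top), integral_dirac,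
    integral_dirac]
  simp only [ENNReal.toReal_inv, ENNReal.toReal_ofNat, smul_eq_mul]
  ring

end TwoPoint

lemma distMean_twoPointMeasure (μ σ : ℝ) : distMean (twoPointMeasure (μ - σ) (μ + σ)) = μ := by
  rw [distMean, integral_twoPointMeasure]
  ring

lemma distVar_twoPointMeasure (μ σ : ℝ) :
    distVar (twoPointMeasure (μ - σ) (μ + σ)) = σ ^ 2 := by
  rw [distVar, distMean_twoPointMeasure, integral_twoPointMeasure]
  ring

lemma isSymmetricDist_twoPointMeasure (μ σ : ℝ) :
    IsSymmetricDist (twoPointMeasure (μ - σ) (μ + σ)) := by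
  unfold IsSymmetricDist
  rw [distMean_twoPointMeasure, ← map_two_mul_sub_eq_self_iff,
    map_twoPointMeasure (by fun_prop), twoPointMeasure_comm]
  ring_nf

/-- if `Q` has mean exactly `μ`, variance exactly `σ²` and is symmetric
about `μ`, then `∫ 2((x−μ)₊)² dQ = σ²`; consequently
`sup_{Q ∈ H_S(μ,σ)} ∫ 2((x−μ)₊)²/σ² dQ = 1`, i.e. `E(x) = 2((x−μ)₊)²/σ²`
is a precise e-variable for `H_S(μ,σ)`. -/
theorem stmt_8 (μ σ : ℝ) (hσ : 0 < σ) :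
    (∀ Q : Measure ℝ, IsProbabilityMeasure Q → Integrable (fun x => x^2) Q →
      distMean Q = μ → distVar Q = σ^2 →
      (∀ x : ℝ, Q (Iic (μ - x)) = Q (Ici (μ + x))) →
      ∫ x, 2 * (max (x - μ) 0)^2 ∂Q = σ^2) ∧
    IsLUB {r : ℝ | ∃ Q : Measure ℝ, MemH μ σ Q ∧ IsSymmetricDist Q ∧
      r = ∫ x, 2 * (max (x - μ) 0)^2 / σ^2 ∂Q} 1 := by
  refine ⟨?_, IsGreatest.isLUB ⟨?_, ?_⟩⟩
  · rintro Q _ hsq rfl hvar hsym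
    rw [← hvar]
    exact integral_two_mul_max_sub_sq_of_symm hsq hsym
  · refine ⟨twoPointMeasure (μ - σ) (μ + σ), ⟨inferInstance, integrable_twoPointMeasure _ _ _,
      (distMean_twoPointMeasure μ σ).le, (distVar_twoPointMeasure μ σ).le⟩,
      isSymmetricDist_twoPointMeasure μ σ, ?_⟩
    rw [integral_twoPointMeasure, sub_sub_cancel_left, add_sub_cancel_left,
      max_eq_right (neg_nonpos.2 hσ.le), max_eq_left hσ.le]
    field_simp
    norm_num
  · rintro r ⟨Q, hQ, hsym, rfl⟩
    rw [integral_div, div_le_one (by positivity)]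
    exact integral_two_mul_max_sub_sq_le_of_memH hQ hsym
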